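/- For every non-negative integer n and real k with 0 ≤ k² ≤ 1/2 and k ≠ 1: |₂F₁(-n, 1/2; 1; 1/(1-k²))| ≤ 1; and for 1/2 ≤ k² < 1: |₂F₁(-n, 1/2; 1; 1/(1-k²))| ≤ (k²/(1-k²))^n. -/

import Mathlib

/-!
Expanding `(1 - x sin² θ)^n` binomially and integrating term by term with Wallis' formula
`∫₀^π sin^{2i} = π ∏_{j<i} (2j+1)/(2j+2) = π (1/2)_i / i!` gives the Laplace-type representation
`₂F₁(-n, 1/2; 1; x) = π⁻¹ ∫₀^π (1 - x sin² θ)^n dθ`.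
For `x ≥ 0` the base `1 - x sin² θ` lies in `[1 - x, 1]`, so `|₂F₁| ≤ max 1 (x - 1) ^ n`;
at `x = 1/(1 - k²)` one has `x - 1 = k²/(1 - k²)`, which is `≤ 1` exactly when `k² ≤ 1/2`.
-/

open Finset Real

noncomputable def poch (a : ℝ) (k : ℕ) : ℝ := ∏ i ∈ Finset.range k, (a + i)

/-- Terminating hypergeometric polynomial ₂F₁(-n, 1/2; 1; x). -/
noncomputable def termF (n : ℕ) (x : ℝ) : ℝ :=
  ∑ i ∈ Finset.range (n + 1),
    poch (-(n : ℝ)) i * poch (1 / 2) i / ((Nat.factorial i) * (Nat.factorial i)) * x ^ i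

lemma poch_neg_natCast_div_factorial (n i : ℕ) :
    poch (-(n : ℝ)) i / i.factorial = (-1) ^ i * n.choose i := by
  suffices poch (-(n : ℝ)) i = (-1) ^ i * n.descFactorial i by
    rw [this, Nat.descFactorial_eq_factorial_mul_choose]
    push_cast
    field_simp
  induction i with
  | zero => simp [poch]
  | succ i ih =>
    rw [poch, prod_range_succ, ← poch, ih, Nat.descFactorial_succ]
    rcases le_or_gt i n with h | h
    · push_cast [Nat.cast_sub h]
      ring
    · simp [Nat.descFactorial_eq_zero_iff_lt.mpr h]

lemma poch_half_div_factorial (i : ℕ) :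
    poch (1 / 2) i / i.factorial = ∏ j ∈ range i, (2 * (j : ℝ) + 1) / (2 * j + 2) := by
  rw [poch, ← prod_range_add_one_eq_factorial]
  push_cast
  rw [← prod_div_distrib]
  refine prod_congr rfl fun j _ => ?_
  rw [div_eq_div_iff] <;> [ring; positivity; positivity]

lemma termF_eq_sum_choose (n : ℕ) (x : ℝ) :
    termF n x = ∑ i ∈ range (n + 1),
      n.choose i * (-x) ^ i * ∏ j ∈ range i, (2 * (j : ℝ) + 1) / (2 * j + 2) := by
  refine sum_congr rfl fun i _ => ?_
  rw [← poch_half_div_factorial, mul_div_mul_comm, poch_neg_natCast_div_factorial, neg_pow]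
  ring

lemma integral_one_sub_mul_sin_sq_pow (n : ℕ) (x : ℝ) :
    ∫ θ in (0 : ℝ)..π, (1 - x * sin θ ^ 2) ^ n = π * ∑ i ∈ range (n + 1),
      n.choose i * (-x) ^ i * ∏ j ∈ range i, (2 * (j : ℝ) + 1) / (2 * j + 2) := by
  have binomial (θ : ℝ) : (1 - x * sin θ ^ 2) ^ n
      = ∑ i ∈ range (n + 1), (n.choose i * (-x) ^ i) * sin θ ^ (2 * i) := by
    rw [sub_eq_neg_add, add_pow]
    refine sum_congr rfl fun i _ => ?_
    rw [pow_mul]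
    ring
  simp only [binomial]
  rw [intervalIntegral.integral_finsetSum fun i _ => (by fun_prop : Continuous _).intervalIntegrable _ _,
    mul_sum]
  refine sum_congr rfl fun i _ => ?_
  rw [intervalIntegral.integral_const_mul, integral_sin_pow_even]
  ring

lemma termF_eq_integral (n : ℕ) (x : ℝ) :
    termF n x = π⁻¹ * ∫ θ in (0 : ℝ)..π, (1 - x * sin θ ^ 2) ^ n := by
  rw [integral_one_sub_mul_sin_sq_pow, ← mul_assoc, inv_mul_cancel₀ pi_ne_zero, one_mul,
    termF_eq_sum_choose]

lemma abs_one_sub_mul_le {x s : ℝ} (hx : 0 ≤ x) (hs₀ : 0 ≤ s) (hs₁ : s ≤ 1) :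
    |1 - x * s| ≤ max 1 (x - 1) := by
  have : x * s ≤ x := mul_le_of_le_one_right hx hs₁
  rw [abs_le]
  constructor
  · linarith [le_max_right 1 (x - 1)]
  · linarith [le_max_left 1 (x - 1), mul_nonneg hx hs₀]

lemma abs_termF_le {x : ℝ} (hx : 0 ≤ x) (n : ℕ) : |termF n x| ≤ max 1 (x - 1) ^ n := by
  have integrand_le (θ : ℝ) : ‖(1 - x * sin θ ^ 2) ^ n‖ ≤ max 1 (x - 1) ^ n := by
    rw [norm_pow, norm_eq_abs]
    exact pow_le_pow_left₀ (abs_nonneg _)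
      (abs_one_sub_mul_le hx (sq_nonneg _) (sin_sq_le_one θ)) n
  have integral_le := intervalIntegral.norm_integral_le_of_norm_le_const (a := 0) (b := π)
    fun θ _ => integrand_le θ
  rw [norm_eq_abs, sub_zero, abs_of_pos pi_pos] at integral_le
  rw [termF_eq_integral, abs_mul, abs_inv, abs_of_pos pi_pos, inv_mul_le_iff₀ pi_pos, mul_comm]
  exact integral_le

theorem termF_bound (n : ℕ) (k : ℝ) :
    (0 ≤ k ^ 2 → k ^ 2 ≤ 1 / 2 → k ≠ 1 → |termF n (1 / (1 - k ^ 2))| ≤ 1) ∧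
    (1 / 2 ≤ k ^ 2 → k ^ 2 < 1 →
      |termF n (1 / (1 - k ^ 2))| ≤ (k ^ 2 / (1 - k ^ 2)) ^ n) := by
  have bound (hk : k ^ 2 < 1) :
      |termF n (1 / (1 - k ^ 2))| ≤ max 1 (k ^ 2 / (1 - k ^ 2)) ^ n := by
    have hpos : 0 < 1 - k ^ 2 := by linarith
    have shift : 1 / (1 - k ^ 2) - 1 = k ^ 2 / (1 - k ^ 2) := by field_simp; ring
    simpa only [shift] using abs_termF_le (by positivity : 0 ≤ 1 / (1 - k ^ 2)) n
  constructor
  · intro _ hk _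
    have hpos : 0 < 1 - k ^ 2 := by linarith
    have : k ^ 2 / (1 - k ^ 2) ≤ 1 := by rw [div_le_one hpos]; linarith
    simpa [max_eq_left this] using bound (by linarith)
  · intro hk hk₁
    have hpos : 0 < 1 - k ^ 2 := by linarith
    have : 1 ≤ k ^ 2 / (1 - k ^ 2) := by rw [le_div_iff₀ hpos]; linarith
    simpa [max_eq_right this] using bound hk₁
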